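/- arXiv:1603.03151 — 13 statements merged into one kernel-verified Lean document; each statement's English description precedes it below -/
import Mathlib

section
/- Let Δ be an n×n real matrix that is categorical, i.e., Δ_ii > 0 for all i and Δ_ij < 0 for all i ≠ j. Then for all deterministic strategies F, G : {1,…,n} → {1,…,n}, the MSDG expected payment satisfies Σ_{i,j} Δ_ij · 1[F(i) = G(j)] ≤ Σ_i Δ_ii, with equality if and only if F = G and F is a permutation (bijection) of {1,…,n}. In particular, the truthful profile (identity, identity) attains the maximum, so the MSDG mechanism is strongly truthful and strictly proper in categorical worlds. -/
/-- If `Δ` is categorical (strictly positive diagonal, strictly negative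
off-diagonal), then for all deterministic strategies `F G` the MSDG expected payment
`Σ_{i,j} Δ i j · 1[F i = G j]` is at most `Σ_i Δ i i`, with equality iff `F = G` and `F`
is a permutation.  Hence MSDG is strongly truthful and strictly proper in categorical
worlds. -/
theorem msdg_strongly_truthful_of_categorical (n : ℕ) (hn : 2 ≤ n)
    (Δ : Matrix (Fin n) (Fin n) ℝ)
    (hdiag : ∀ i, 0 < Δ i i) (hoff : ∀ i j, i ≠ j → Δ i j < 0)
    (F G : Fin n → Fin n) :
    (∑ i, ∑ j, Δ i j * (if F i = G j then (1 : ℝ) else 0)) ≤ (∑ i, Δ i i) ∧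
      ((∑ i, ∑ j, Δ i j * (if F i = G j then (1 : ℝ) else 0)) = (∑ i, Δ i i) ↔
        F = G ∧ Function.Bijective F) := by
  classical
  have key : ∀ i j : Fin n,
      Δ i j * (if F i = G j then (1 : ℝ) else 0) ≤ (if i = j then Δ i i else 0) := by
    intro i j
    by_cases hij : i = j
    · subst hij
      rw [if_pos rfl]
      by_cases h : F i = G i
      · rw [if_pos h, mul_one]
      · rw [if_neg h, mul_zero]; exact le_of_lt (hdiag i)
    · rw [if_neg hij]
      by_cases h : F i = G j
      · rw [if_pos h, mul_one]; exact le_of_lt (hoff i j hij)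
      · rw [if_neg h, mul_zero]
  have htr : (∑ i, ∑ j, (if i = j then Δ i i else 0)) = ∑ i, Δ i i := by
    simp
  have hle2 : ∀ p ∈ (Finset.univ : Finset (Fin n × Fin n)),
      Δ p.1 p.2 * (if F p.1 = G p.2 then (1 : ℝ) else 0) ≤
        (if p.1 = p.2 then Δ p.1 p.1 else 0) := fun p _ => key p.1 p.2
  have hprod1 : (∑ i, ∑ j, Δ i j * (if F i = G j then (1 : ℝ) else 0)) =
      ∑ p : Fin n × Fin n, Δ p.1 p.2 * (if F p.1 = G p.2 then (1 : ℝ) else 0) := by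
    rw [← Finset.sum_product']; rfl
  have hprod2 : (∑ i, ∑ j, (if i = j then Δ i i else 0)) =
      ∑ p : Fin n × Fin n, (if p.1 = p.2 then Δ p.1 p.1 else 0) := by
    rw [← Finset.sum_product']; rfl
  have le1 : (∑ i, ∑ j, Δ i j * (if F i = G j then (1 : ℝ) else 0)) ≤ ∑ i, Δ i i := by
    rw [hprod1, ← htr, hprod2]
    exact Finset.sum_le_sum hle2
  refine ⟨le1, ?_, ?_⟩
  · intro heq
    have heq' : (∑ p : Fin n × Fin n, Δ p.1 p.2 * (if F p.1 = G p.2 then (1 : ℝ) else 0)) =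
        ∑ p : Fin n × Fin n, (if p.1 = p.2 then Δ p.1 p.1 else 0) := by
      rw [← hprod1, ← hprod2, htr, heq]
    have hpt := (Finset.sum_eq_sum_iff_of_le hle2).mp heq'
    have hpt' : ∀ i j : Fin n,
        Δ i j * (if F i = G j then (1 : ℝ) else 0) = (if i = j then Δ i i else 0) :=
      fun i j => hpt (i, j) (Finset.mem_univ _)
    have hFG : F = G := by
      funext i
      have h := hpt' i i
      simp only [if_pos rfl] at h
      by_contra hne
      rw [if_neg hne, mul_zero] at h
      exact absurd h.symm (ne_of_gt (hdiag i))
    have hinj : Function.Injective F := by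
      intro i j hFij
      by_contra hne
      have hFiGj : F i = G j := by rw [← hFG]; exact hFij
      have h := hpt' i j
      rw [if_pos hFiGj, mul_one, if_neg hne] at h
      exact absurd h (ne_of_lt (hoff i j hne))
    exact ⟨hFG, Finite.injective_iff_bijective.mp hinj⟩
  · rintro ⟨rfl, hbij⟩
    have : ∀ i j : Fin n, (F i = F j) ↔ i = j := fun i j => hbij.injective.eq_iff
    calc (∑ i, ∑ j, Δ i j * (if F i = F j then (1 : ℝ) else 0))
        = ∑ i, ∑ j, (if i = j then Δ i i else 0) := by
          apply Finset.sum_congr rfl; intro i _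
          apply Finset.sum_congr rfl; intro j _
          by_cases h : i = j
          · subst h; simp
          · rw [if_neg (fun hF => h ((this i j).mp hF)), mul_zero, if_neg h]
      _ = ∑ i, Δ i i := htr
end

section
/- Let n ≥ 2 and let Δ be a symmetric n×n real matrix whose rows each sum to zero. Suppose Δ is not categorical, i.e., either some diagonal entry satisfies Δ_ii ≤ 0 or some off-diagonal entry satisfies Δ_ij ≥ 0 for i ≠ j. Then there exists a deterministic strategy F that is not a permutation of {1,…,n} such that Σ_{i,j} Δ_ij · 1[F(i) = F(j)] ≥ Σ_i Δ_ii. In particular, the non-permutation symmetric profile (F,F) has MSDG expected payment at least that of the truthful profile, so the MSDG mechanism is not strongly truthful. -/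
/-- Key computation: for `F = fun a => if a = i then k else a` with `i ≠ k`,
the indicator of `F a = F b` decomposes. -/
lemma msdg_indicator_decomp {n : ℕ} (i k : Fin n) (hik : i ≠ k) (a b : Fin n) :
    (if (if a = i then k else a) = (if b = i then k else b) then (1 : ℝ) else 0)
      = (if a = b then (1 : ℝ) else 0) + (if a = i ∧ b = k then 1 else 0)
        + (if a = k ∧ b = i then 1 else 0) := by
  by_cases ha : a = i <;> by_cases hb : b = i <;>
    by_cases hak : a = k <;> by_cases hbk : b = k <;>
    by_cases hab : a = b <;> simp_all [eq_comm]

/-- If `Δ` is a symmetric matrix with zero row sums that is not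
categorical (some diagonal entry `≤ 0` or some off-diagonal entry `≥ 0`), then there is
a non-permutation deterministic strategy `F` whose symmetric profile `(F,F)` earns MSDG
expected payment at least the truthful payment `Σ_i Δ i i`; hence MSDG is not strongly
truthful. -/
theorem msdg_not_strongly_truthful_of_not_categorical (n : ℕ) (hn : 2 ≤ n)
    (Δ : Matrix (Fin n) (Fin n) ℝ) (hsymm : Δ.IsSymm)
    (hrow : ∀ i, ∑ j, Δ i j = 0)
    (hnotcat : (∃ i, Δ i i ≤ 0) ∨ ∃ i j, i ≠ j ∧ 0 ≤ Δ i j) :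
    ∃ F : Fin n → Fin n, ¬ Function.Bijective F ∧
      (∑ i, Δ i i) ≤ ∑ i, ∑ j, Δ i j * (if F i = F j then (1 : ℝ) else 0) := by
  -- first obtain i ≠ k with 0 ≤ Δ i k
  obtain ⟨i, k, hik, hpos⟩ : ∃ i k, i ≠ k ∧ 0 ≤ Δ i k := by
    rcases hnotcat with ⟨i, hdiag⟩ | ⟨i, j, hij, hpos⟩
    · -- row sum zero and Δ i i ≤ 0 gives some off-diagonal ≥ 0
      by_contra hcon
      push_neg at hcon
      have herase : ∑ j ∈ Finset.univ.erase i, Δ i j = -Δ i i := by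
        have := hrow i
        have h2 : ∑ j ∈ Finset.univ.erase i, Δ i j + Δ i i = ∑ j, Δ i j := by
          rw [Finset.sum_erase_add _ _ (Finset.mem_univ i)]
        linarith
      have hne : (Finset.univ.erase i).Nonempty := by
        have : 1 < Fintype.card (Fin n) := by rw [Fintype.card_fin]; omega
        obtain ⟨j, hj⟩ := Fintype.exists_ne_of_one_lt_card this i
        exact ⟨j, Finset.mem_erase.mpr ⟨hj, Finset.mem_univ j⟩⟩
      have hlt : ∑ j ∈ Finset.univ.erase i, Δ i j < 0 := by
        apply Finset.sum_lt_sum_of_nonempty hne ?_ |>.trans_eq (Finset.sum_const_zero)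
        intro j hj
        have := hcon i j (Finset.ne_of_mem_erase hj).symm
        linarith
      linarith
    · exact ⟨i, j, hij, hpos⟩
  refine ⟨fun a => if a = i then k else a, ?_, ?_⟩
  · intro hbij
    have h1 : (if i = i then k else i) = (if k = i then k else k) := by
      simp [hik.symm, if_neg]
    exact hik (hbij.1 h1)
  · have hdec : ∀ a b : Fin n,
        Δ a b * (if (if a = i then k else a) = (if b = i then k else b) then (1 : ℝ) else 0)
        = Δ a b * (if a = b then (1 : ℝ) else 0)
          + Δ a b * (if a = i ∧ b = k then 1 else 0)
          + Δ a b * (if a = k ∧ b = i then 1 else 0) := by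
      intro a b
      rw [msdg_indicator_decomp i k hik]
      ring
    simp only [hdec, Finset.sum_add_distrib]
    have h1 : ∑ a, ∑ b, Δ a b * (if a = b then (1 : ℝ) else 0) = ∑ a, Δ a a := by
      simp [mul_ite]
    have h2 : ∑ a : Fin n, ∑ b : Fin n, Δ a b * (if a = i ∧ b = k then (1 : ℝ) else 0)
        = Δ i k := by
      simp [mul_ite, ite_and, Finset.sum_ite_eq]
    have h3 : ∑ a : Fin n, ∑ b : Fin n, Δ a b * (if a = k ∧ b = i then (1 : ℝ) else 0)
        = Δ k i := by
      simp [mul_ite, ite_and, Finset.sum_ite_eq]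
    rw [h1, h2, h3]
    have hki : Δ k i = Δ i k := by
      have := congrFun (congrFun hsymm i) k
      simpa [Matrix.transpose] using this
    linarith
end

section
/- Let Δ be an n×n real matrix and let S = Sign(Δ), i.e., S(i,j) = 1 if Δ_ij > 0 and S(i,j) = 0 otherwise. Then for all deterministic strategies F, G : {1,…,n} → {1,…,n}, the CA expected payment satisfies Σ_{i,j} Δ_ij · S(F(i), G(j)) ≤ Σ_{(i,j) : Δ_ij > 0} Δ_ij, and the truthful profile (identity, identity) attains this upper bound: Σ_{i,j} Δ_ij · S(i,j) = Σ_{(i,j) : Δ_ij > 0} Δ_ij. -/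
/-- With score matrix `S = Sign(Δ)` (the CA mechanism), every pair of
deterministic strategies earns at most the sum of the positive entries of `Δ`, and the
truthful profile (identity, identity) attains exactly this bound. -/
theorem ca_truthful_attains_max (n : ℕ) (Δ : Matrix (Fin n) (Fin n) ℝ)
    (F G : Fin n → Fin n) :
    (∑ i, ∑ j, Δ i j * (if 0 < Δ (F i) (G j) then (1 : ℝ) else 0)) ≤
        (∑ i, ∑ j, if 0 < Δ i j then Δ i j else 0) ∧
      (∑ i, ∑ j, Δ i j * (if 0 < Δ i j then (1 : ℝ) else 0)) =
        (∑ i, ∑ j, if 0 < Δ i j then Δ i j else 0) := by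
  constructor
  · apply Finset.sum_le_sum
    intro i _
    apply Finset.sum_le_sum
    intro j _
    by_cases h : 0 < Δ (F i) (G j) <;> by_cases h' : 0 < Δ i j <;>
      simp [h, h'] <;> linarith
  · apply Finset.sum_congr rfl
    intro i _
    apply Finset.sum_congr rfl
    intro j _
    by_cases h : 0 < Δ i j <;> simp [h]
end

section
/- Let Δ be a nonzero n×n real matrix each of whose rows sums to zero. Then Σ_{(i,j) : Δ_ij > 0} Δ_ij > 0. Consequently, under the CA mechanism with score matrix S = Sign(Δ), the truthful profile has strictly positive expected payment, which is strictly greater than the expected payment (zero) of any profile in which either agent plays an uninformed (constant) strategy; hence the CA mechanism is informed-truthful and proper for all worlds. -/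
/-- If `Δ ≠ 0` and its rows (and columns) sum to zero, then the sum of
the positive entries of `Δ` is strictly positive.  Consequently, under the CA mechanism
with score matrix `Sign(Δ)`, the truthful profile has strictly positive expected
payment, while any profile in which either agent plays an uninformed (constant)
strategy earns exactly zero, hence strictly less than truthful: the CA mechanism is
informed-truthful and proper for all worlds. -/
theorem ca_informed_truthful (n : ℕ) (Δ : Matrix (Fin n) (Fin n) ℝ) (hΔ : Δ ≠ 0)
    (hrow : ∀ i, ∑ j, Δ i j = 0) (hcol : ∀ j, ∑ i, Δ i j = 0) :
    (0 < ∑ i, ∑ j, if 0 < Δ i j then Δ i j else 0) ∧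
      ∀ F G : Fin n → Fin n, ((∃ r, ∀ i, F i = r) ∨ (∃ r, ∀ j, G j = r)) →
        (∑ i, ∑ j, Δ i j * (if 0 < Δ (F i) (G j) then (1 : ℝ) else 0)) = 0 ∧
          (∑ i, ∑ j, Δ i j * (if 0 < Δ (F i) (G j) then (1 : ℝ) else 0)) <
            ∑ i, ∑ j, Δ i j * (if 0 < Δ i j then (1 : ℝ) else 0) := by
  -- there is a positive entry
  obtain ⟨i₀, j₀, hne⟩ : ∃ i j, Δ i j ≠ 0 := by
    by_contra h
    push_neg at h
    exact hΔ (by ext i j; exact h i j)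
  have hpos : ∃ i j, 0 < Δ i j := by
    rcases lt_or_gt_of_ne hne with hlt | hgt
    · by_contra h
      push_neg at h
      have hsum : ∑ j, Δ i₀ j < 0 := by
        have : ∀ j ∈ Finset.univ, Δ i₀ j ≤ 0 := fun j _ => h i₀ j
        have hle : ∑ j, Δ i₀ j ≤ 0 := Finset.sum_nonpos this
        rcases hle.lt_or_eq with h1 | h1
        · exact h1
        · exfalso
          have := (Finset.sum_eq_zero_iff_of_nonpos this).mp h1 j₀ (Finset.mem_univ _)
          exact hne this
      rw [hrow i₀] at hsum
      exact lt_irrefl 0 hsum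
    · exact ⟨i₀, j₀, hgt⟩
  obtain ⟨a, b, hab⟩ := hpos
  have hposSum : 0 < ∑ i, ∑ j, if 0 < Δ i j then Δ i j else 0 := by
    apply Finset.sum_pos' (fun i _ => Finset.sum_nonneg fun j _ => by split_ifs with h; exacts [h.le, le_rfl])
    refine ⟨a, Finset.mem_univ _, Finset.sum_pos' (fun j _ => by split_ifs with h; exacts [h.le, le_rfl]) ⟨b, Finset.mem_univ _, by simp [hab]⟩⟩
  have htruth : (∑ i, ∑ j, Δ i j * (if 0 < Δ i j then (1 : ℝ) else 0))
      = ∑ i, ∑ j, if 0 < Δ i j then Δ i j else 0 := by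
    apply Finset.sum_congr rfl; intro i _
    apply Finset.sum_congr rfl; intro j _
    by_cases h : 0 < Δ i j <;> simp [h]
  refine ⟨hposSum, ?_⟩
  intro F G hc
  have hzero : (∑ i, ∑ j, Δ i j * (if 0 < Δ (F i) (G j) then (1 : ℝ) else 0)) = 0 := by
    rcases hc with ⟨r, hr⟩ | ⟨r, hr⟩
    · rw [Finset.sum_comm]
      apply Finset.sum_eq_zero
      intro j _
      have : ∑ i, Δ i j * (if 0 < Δ (F i) (G j) then (1 : ℝ) else 0)
          = (∑ i, Δ i j) * (if 0 < Δ r (G j) then (1 : ℝ) else 0) := by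
        rw [Finset.sum_mul]
        exact Finset.sum_congr rfl fun i _ => by rw [hr i]
      rw [this, hcol j, zero_mul]
    · apply Finset.sum_eq_zero
      intro i _
      have : ∑ j, Δ i j * (if 0 < Δ (F i) (G j) then (1 : ℝ) else 0)
          = (∑ j, Δ i j) * (if 0 < Δ (F i) r then (1 : ℝ) else 0) := by
        rw [Finset.sum_mul]
        exact Finset.sum_congr rfl fun j _ => by rw [hr j]
      rw [this, hrow i, zero_mul]
  exact ⟨hzero, by rw [hzero, htruth]; exact hposSum⟩
end

section
/- Let Δ be an n×n real matrix and suppose the signal distribution has clustered signals: there exist i ≠ i' such that rows i and i' of Sign(Δ) are identical, i.e., for every j, Δ_ij > 0 if and only if Δ_{i'j} > 0. Let F be the deterministic strategy that is the identity except F(i) = i'. Then F is not a permutation, and under the CA mechanism with score matrix S = Sign(Δ), the profile (F, identity) achieves exactly the truthful expected payment: Σ_{i,j} Δ_ij · S(F(i), j) = Σ_{i,j} Δ_ij · S(i,j). The analogous statement holds when two columns of Sign(Δ) are identical, with the second agent deviating. -/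
lemma not_bij_aux {n : ℕ} (i i' : Fin n) (h : i ≠ i') :
    ¬ Function.Bijective (fun k : Fin n => if k = i then i' else k) := by
  intro hb
  have : i = i' := hb.1 (by simp [h, h.symm] : (if i = i then i' else i) = (if i' = i then i' else i'))
  exact h this

/-- If the signal distribution has clustered signals (two rows of
`Sign(Δ)` identical), then the non-permutation strategy `F` that is the identity
except for reporting `i'` on signal `i` achieves, against a truthful opponent, exactly
the truthful expected payment under the CA mechanism (score matrix `Sign(Δ)`).  The
analogous statement holds when two columns of `Sign(Δ)` are identical, with the second
agent deviating. -/
theorem ca_clustered_signals_matching_deviation (n : ℕ) (Δ : Matrix (Fin n) (Fin n) ℝ) :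
    (∀ i i' : Fin n, i ≠ i' → (∀ j, 0 < Δ i j ↔ 0 < Δ i' j) →
        ¬ Function.Bijective (fun k : Fin n => if k = i then i' else k) ∧
          (∑ a, ∑ b, Δ a b *
              (if 0 < Δ (if a = i then i' else a) b then (1 : ℝ) else 0)) =
            ∑ a, ∑ b, Δ a b * (if 0 < Δ a b then (1 : ℝ) else 0)) ∧
      (∀ j j' : Fin n, j ≠ j' → (∀ i, 0 < Δ i j ↔ 0 < Δ i j') →
        ¬ Function.Bijective (fun k : Fin n => if k = j then j' else k) ∧
          (∑ a, ∑ b, Δ a b *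
              (if 0 < Δ a (if b = j then j' else b) then (1 : ℝ) else 0)) =
            ∑ a, ∑ b, Δ a b * (if 0 < Δ a b then (1 : ℝ) else 0)) := by
  constructor
  · intro i i' hne hrow
    refine ⟨not_bij_aux i i' hne, ?_⟩
    refine Finset.sum_congr rfl fun a _ => Finset.sum_congr rfl fun b _ => ?_
    by_cases ha : a = i
    · subst ha; simp [hrow b]
    · simp [ha]
  · intro j j' hne hcol
    refine ⟨not_bij_aux j j' hne, ?_⟩
    refine Finset.sum_congr rfl fun a _ => Finset.sum_congr rfl fun b _ => ?_
    by_cases hb : b = j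
    · subst hb; simp [hcol a]
    · simp [hb]
end

section
/- Let Δ be an n×n real matrix with Δ_ij ≠ 0 for all i,j, and suppose there are no clustered signals: no two rows of Sign(Δ) are identical and no two columns of Sign(Δ) are identical. Then under the CA mechanism with score matrix S = Sign(Δ), any profile in which at least one agent plays a non-permutation (non-injective) deterministic strategy has expected payment strictly less than the truthful payment: if F is not injective (or G is not injective), then Σ_{i,j} Δ_ij · S(F(i), G(j)) < Σ_{(i,j) : Δ_ij > 0} Δ_ij for every strategy of the other agent. -/
/-- If `Δ` has no zero entries and no clustered signals (no two rows
of `Sign(Δ)` identical, no two columns identical), then under the CA mechanism any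
profile in which at least one agent plays a non-injective deterministic strategy earns
strictly less than the truthful payment `Σ_{(i,j):Δ_ij>0} Δ_ij`, regardless of the
other agent's strategy. -/
theorem ca_noninjective_strictly_worse (n : ℕ) (Δ : Matrix (Fin n) (Fin n) ℝ)
    (hΔ : ∀ i j, Δ i j ≠ 0)
    (hrows : ∀ i i' : Fin n, i ≠ i' → ¬ ∀ j, (0 < Δ i j ↔ 0 < Δ i' j))
    (hcols : ∀ j j' : Fin n, j ≠ j' → ¬ ∀ i, (0 < Δ i j ↔ 0 < Δ i j'))
    (F G : Fin n → Fin n)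
    (h : ¬ Function.Injective F ∨ ¬ Function.Injective G) :
    (∑ i, ∑ j, Δ i j * (if 0 < Δ (F i) (G j) then (1 : ℝ) else 0)) <
      ∑ i, ∑ j, if 0 < Δ i j then Δ i j else 0 := by
  set f : Fin n × Fin n → ℝ :=
    fun p => Δ p.1 p.2 * (if 0 < Δ (F p.1) (G p.2) then (1 : ℝ) else 0) with hf
  set g : Fin n × Fin n → ℝ := fun p => if 0 < Δ p.1 p.2 then Δ p.1 p.2 else 0 with hg
  have key : ∀ p : Fin n × Fin n, f p ≤ g p := by
    intro p
    simp only [hf, hg]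
    split_ifs with h1 h2 h2 <;> push_neg at * <;> nlinarith [hΔ p.1 p.2]
  have mkwitF : ∀ (a b j : Fin n), F a = F b → (0 < Δ a j) → ¬(0 < Δ b j) →
      ∃ p, f p < g p := by
    intro a b j hab ha hb
    by_cases hc : 0 < Δ (F a) (G j)
    · refine ⟨(b, j), ?_⟩
      simp only [hf, hg, ← hab, if_pos hc, if_neg hb, mul_one]
      exact lt_of_le_of_ne (not_lt.mp hb) (hΔ b j)
    · rw [hab] at hc
      refine ⟨(a, j), ?_⟩
      rw [← hab] at hc
      simp only [hf, hg, if_pos ha, if_neg hc, mul_zero]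
      exact ha
  have mkwitG : ∀ (a b i : Fin n), G a = G b → (0 < Δ i a) → ¬(0 < Δ i b) →
      ∃ p, f p < g p := by
    intro a b i hab ha hb
    by_cases hc : 0 < Δ (F i) (G a)
    · refine ⟨(i, b), ?_⟩
      simp only [hf, hg, ← hab, if_pos hc, if_neg hb, mul_one]
      exact lt_of_le_of_ne (not_lt.mp hb) (hΔ i b)
    · refine ⟨(i, a), ?_⟩
      simp only [hf, hg, if_pos ha, if_neg hc, mul_zero]
      exact ha
  have hw : ∃ p : Fin n × Fin n, f p < g p := by
    rcases h with hF | hG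
    · rw [Function.not_injective_iff] at hF
      obtain ⟨a, b, hab, hne⟩ := hF
      have hj := hrows a b hne
      push_neg at hj
      obtain ⟨j, hj⟩ := hj
      rcases hj with ⟨ha, hb⟩ | ⟨ha, hb⟩
      · exact mkwitF a b j hab ha (not_lt.mpr hb)
      · exact mkwitF b a j hab.symm hb (not_lt.mpr ha)
    · rw [Function.not_injective_iff] at hG
      obtain ⟨a, b, hab, hne⟩ := hG
      have hi := hcols a b hne
      push_neg at hi
      obtain ⟨i, hi⟩ := hi
      rcases hi with ⟨ha, hb⟩ | ⟨ha, hb⟩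
      · exact mkwitG a b i hab ha (not_lt.mpr hb)
      · exact mkwitG b a i hab.symm hb (not_lt.mpr ha)
  calc (∑ i, ∑ j, Δ i j * (if 0 < Δ (F i) (G j) then (1 : ℝ) else 0))
      = ∑ p : Fin n × Fin n, f p := by rw [← Finset.sum_product', Finset.univ_product_univ]
    _ < ∑ p : Fin n × Fin n, g p := by
        obtain ⟨p0, hp0⟩ := hw
        exact Finset.sum_lt_sum (fun p _ => key p) ⟨p0, Finset.mem_univ p0, hp0⟩
    _ = ∑ i, ∑ j, if 0 < Δ i j then Δ i j else 0 := by rw [← Finset.sum_product', Finset.univ_product_univ]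
end

section
/- Let Δ be an n×n real matrix and S = Sign(Δ). Suppose the signal distribution has paired permutations: there exist distinct n×n permutation matrices P ≠ Q with P · S = S · Q (equivalently P · S · Qᵀ = S). Let σ and τ be the permutations of {1,…,n} corresponding to P and Q used as deterministic strategies. Then (σ, τ) is an asymmetric permutation strategy profile with the same CA expected payment as truthful reporting: Σ_{i,j} Δ_ij · S(σ(i), τ(j)) = Σ_{i,j} Δ_ij · S(i,j). -/
/-- The permutation matrix of `σ`: entry `(i,j)` is `1` iff `j = σ i`.  With this
convention, for deterministic strategies `F, G`, the `(i,j)` entry of `F · S · Gᵀ` is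
`S (F i) (G j)`. -/
noncomputable def permMat {n : ℕ} (σ : Equiv.Perm (Fin n)) : Matrix (Fin n) (Fin n) ℝ :=
  Matrix.of fun i j => if j = σ i then (1 : ℝ) else 0

/-- `Sign(Δ)`: the 0/1 matrix with entry `1` where `Δ` is strictly positive. -/
noncomputable def signM {n : ℕ} (Δ : Matrix (Fin n) (Fin n) ℝ) : Matrix (Fin n) (Fin n) ℝ :=
  Matrix.of fun i j => if 0 < Δ i j then (1 : ℝ) else 0

lemma permMat_entry {n : ℕ} (σ τ : Equiv.Perm (Fin n)) (S : Matrix (Fin n) (Fin n) ℝ)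
    (i j : Fin n) : (permMat σ * S * (permMat τ).transpose) i j = S (σ i) (τ j) := by
  simp [Matrix.mul_apply, permMat, Matrix.transpose_apply, ite_mul, mul_ite,
    Finset.sum_ite_eq, Finset.sum_ite_eq']

/-- If the signal distribution has paired permutations — distinct
permutations `σ ≠ τ` whose permutation matrices `P, Q` satisfy `P · S · Qᵀ = S` for
`S = Sign(Δ)` — then the asymmetric permutation profile `(σ, τ)` earns the same CA
expected payment as truthful reporting. -/
theorem ca_paired_permutations_match_truthful (n : ℕ) (Δ : Matrix (Fin n) (Fin n) ℝ)
    (σ τ : Equiv.Perm (Fin n)) (hne : σ ≠ τ)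
    (hpair : permMat σ * signM Δ * (permMat τ).transpose = signM Δ) :
    (∑ i, ∑ j, Δ i j * signM Δ (σ i) (τ j)) = ∑ i, ∑ j, Δ i j * signM Δ i j := by
  refine Finset.sum_congr rfl fun i _ => Finset.sum_congr rfl fun j _ => ?_
  rw [← permMat_entry σ τ (signM Δ) i j, hpair]
end

section
/- Let Δ be an n×n real matrix with Δ_ij ≠ 0 for all i,j, and let S = Sign(Δ). Suppose the signal distribution has neither clustered signals (no two rows of Sign(Δ) identical and no two columns identical) nor paired permutations (there are no distinct permutation matrices P ≠ Q with P · Sign(Δ) = Sign(Δ) · Q). Then the CA mechanism is strongly truthful: for all deterministic strategies F, G : {1,…,n} → {1,…,n}, Σ_{i,j} Δ_ij · S(F(i), G(j)) ≤ Σ_{i,j} Δ_ij · S(i,j), with equality only when F = G and F is a permutation of {1,…,n}. -/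
/-- If `Δ` has no zero entries, no clustered signals (no two rows of
`Sign(Δ)` identical and no two columns identical) and no paired permutations (no
distinct permutation matrices `P ≠ Q` with `P · Sign(Δ) = Sign(Δ) · Q`), then the CA
mechanism is strongly truthful: every deterministic profile earns at most the truthful
payment, with equality only when both agents play the same permutation strategy. -/
theorem ca_strongly_truthful (n : ℕ) (hn : 2 ≤ n) (Δ : Matrix (Fin n) (Fin n) ℝ)
    (hΔ : ∀ i j, Δ i j ≠ 0)
    (hrows : ∀ i i' : Fin n, i ≠ i' → ¬ ∀ j, (0 < Δ i j ↔ 0 < Δ i' j))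
    (hcols : ∀ j j' : Fin n, j ≠ j' → ¬ ∀ i, (0 < Δ i j ↔ 0 < Δ i j'))
    (hpp : ¬ ∃ σ τ : Equiv.Perm (Fin n), σ ≠ τ ∧
      permMat σ * signM Δ = signM Δ * permMat τ)
    (F G : Fin n → Fin n) :
    (∑ i, ∑ j, Δ i j * signM Δ (F i) (G j)) ≤ (∑ i, ∑ j, Δ i j * signM Δ i j) ∧
      ((∑ i, ∑ j, Δ i j * signM Δ (F i) (G j)) = (∑ i, ∑ j, Δ i j * signM Δ i j) →
        F = G ∧ Function.Bijective F) := by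
  have hSval : ∀ a b : Fin n, signM Δ a b = if 0 < Δ a b then (1:ℝ) else 0 := fun a b => rfl
  have h01 : ∀ a b : Fin n, 0 ≤ signM Δ a b ∧ signM Δ a b ≤ 1 := by
    intro a b; rw [hSval]; split <;> norm_num
  have hterm : ∀ i j : Fin n, Δ i j * signM Δ (F i) (G j) ≤ Δ i j * signM Δ i j := by
    intro i j
    rcases (hΔ i j).lt_or_gt with h | h
    · have h0 : signM Δ i j = 0 := by rw [hSval, if_neg (not_lt.mpr h.le)]
      rw [h0, mul_zero]
      exact mul_nonpos_of_nonpos_of_nonneg h.le (h01 _ _).1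
    · have h1 : signM Δ i j = 1 := by rw [hSval, if_pos h]
      rw [h1, mul_one]
      exact mul_le_of_le_one_right h.le (h01 _ _).2
  have hle : (∑ i, ∑ j, Δ i j * signM Δ (F i) (G j)) ≤ (∑ i, ∑ j, Δ i j * signM Δ i j) :=
    Finset.sum_le_sum fun i _ => Finset.sum_le_sum fun j _ => hterm i j
  refine ⟨hle, fun hEq => ?_⟩
  -- equality termwise
  have hEq1 : ∀ i ∈ Finset.univ, (∑ j, Δ i j * signM Δ (F i) (G j)) = (∑ j, Δ i j * signM Δ i j) :=
    (Finset.sum_eq_sum_iff_of_le (fun i _ =>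
      Finset.sum_le_sum fun j _ => hterm i j)).mp hEq
  have hEq2 : ∀ i j : Fin n, Δ i j * signM Δ (F i) (G j) = Δ i j * signM Δ i j := by
    intro i j
    exact (Finset.sum_eq_sum_iff_of_le (fun j _ => hterm i j)).mp (hEq1 i (Finset.mem_univ i)) j
      (Finset.mem_univ j)
  have hsign : ∀ i j : Fin n, (0 < Δ (F i) (G j) ↔ 0 < Δ i j) := by
    intro i j
    have h := mul_left_cancel₀ (hΔ i j) (hEq2 i j)
    rw [hSval, hSval] at h
    by_cases h1 : 0 < Δ (F i) (G j) <;> by_cases h2 : 0 < Δ i j <;>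
      simp [h1, h2] at h ⊢
  -- F injective
  have hFinj : Function.Injective F := by
    intro i i' hii
    by_contra hne
    refine hrows i i' hne fun j => ?_
    rw [← hsign i j, ← hsign i' j, hii]
  have hFbij : Function.Bijective F := Finite.injective_iff_bijective.mp hFinj
  -- G injective
  have hGinj : Function.Injective G := by
    intro j j' hjj
    by_contra hne
    refine hcols j j' hne fun i => ?_
    rw [← hsign i j, ← hsign i j', hjj]
  have hGbij : Function.Bijective G := Finite.injective_iff_bijective.mp hGinj
  set σ : Equiv.Perm (Fin n) := Equiv.ofBijective F hFbij with hσ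
  set τ : Equiv.Perm (Fin n) := Equiv.ofBijective G hGbij with hτ
  have hmat : permMat σ * signM Δ = signM Δ * permMat τ := by
    ext i j
    have hl : (permMat σ * signM Δ) i j = signM Δ (F i) j := by
      simp only [Matrix.mul_apply, permMat, Matrix.of_apply]
      rw [Finset.sum_eq_single (σ i)]
      · simp [hσ, Equiv.ofBijective]
      · intro b _ hb; rw [if_neg (by exact fun h => hb h), zero_mul]
      · intro h; exact absurd (Finset.mem_univ _) h
    have hr : (signM Δ * permMat τ) i j = signM Δ i (τ.symm j) := by
      simp only [Matrix.mul_apply, permMat, Matrix.of_apply]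
      rw [Finset.sum_eq_single (τ.symm j)]
      · simp
      · intro b _ hb
        rw [if_neg, mul_zero]
        intro h; exact hb (by rw [h, Equiv.symm_apply_apply])
      · intro h; exact absurd (Finset.mem_univ _) h
    rw [hl, hr]
    have hGτ : G (τ.symm j) = j := by
      have : τ (τ.symm j) = j := Equiv.apply_symm_apply τ j
      simpa [hτ, Equiv.ofBijective] using this
    rw [hSval, hSval]
    have := hsign i (τ.symm j)
    rw [hGτ] at this
    by_cases h : 0 < Δ i (τ.symm j)
    · rw [if_pos (this.mpr h), if_pos h]
    · rw [if_neg (fun hh => h (this.mp hh)), if_neg h]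
  have hστ : σ = τ := by
    by_contra hne
    exact hpp ⟨σ, τ, hne, hmat⟩
  refine ⟨funext fun i => ?_, hFbij⟩
  have : σ i = τ i := by rw [hστ]
  simpa [hσ, hτ, Equiv.ofBijective] using this
end

section
/- Let Δ be an n×n real matrix and suppose rows i ≠ i' of Sign(Δ) are identical. Let Δ' be the matrix obtained from Δ by exchanging rows i and i', and let F be the deterministic strategy given by the transposition swapping i and i' (F(i) = i', F(i') = i, F(k) = k otherwise). Then Sign(Δ') = Sign(Δ), and for EVERY score matrix S : {1,…,n}×{1,…,n} → ℝ: Σ_{a,b} Δ_{ab} S(a,b) = Σ_{a,b} Δ'_{ab} S(F(a), b) and Σ_{a,b} Δ'_{ab} S(a,b) = Σ_{a,b} Δ_{ab} S(F(a), b). Consequently, no score matrix S can simultaneously satisfy the strong-truthfulness inequalities E_Δ(S, 𝕀, 𝕀) > E_Δ(S, F, 𝕀) and E_{Δ'}(S, 𝕀, 𝕀) > E_{Δ'}(S, F, 𝕀); hence no multi-task mechanism that chooses its score matrix using only the sign structure Sign(Δ) can be strongly truthful on a domain with clustered signals. -/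
/-- Suppose rows `i ≠ i'` of `Sign(Δ)` are identical, let `Δ'` be `Δ`
with rows `i` and `i'` exchanged, and let `F` be the transposition swapping `i` and
`i'`.  Then `Sign(Δ') = Sign(Δ)`, for every score matrix `S` the expected payments
satisfy `E_Δ(S,𝕀,𝕀) = E_{Δ'}(S,F,𝕀)` and `E_{Δ'}(S,𝕀,𝕀) = E_Δ(S,F,𝕀)`, and consequently
no score matrix can satisfy both strong-truthfulness strict inequalities
`E_Δ(S,𝕀,𝕀) > E_Δ(S,F,𝕀)` and `E_{Δ'}(S,𝕀,𝕀) > E_{Δ'}(S,F,𝕀)`:  no multi-task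
mechanism choosing its score matrix from the sign structure alone is strongly truthful
on a domain with clustered signals. -/
theorem no_sign_based_strongly_truthful_with_clustered_signals
    (n : ℕ) (Δ : Matrix (Fin n) (Fin n) ℝ) (i i' : Fin n) (hne : i ≠ i')
    (hclus : ∀ j, 0 < Δ i j ↔ 0 < Δ i' j) :
    (signM (Matrix.of fun a b => Δ (Equiv.swap i i' a) b) = signM Δ) ∧
      (∀ S : Fin n → Fin n → ℝ,
        (∑ a, ∑ b, Δ a b * S a b) =
            (∑ a, ∑ b, Δ (Equiv.swap i i' a) b * S (Equiv.swap i i' a) b) ∧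
          (∑ a, ∑ b, Δ (Equiv.swap i i' a) b * S a b) =
            (∑ a, ∑ b, Δ a b * S (Equiv.swap i i' a) b)) ∧
      ∀ S : Fin n → Fin n → ℝ,
        ¬ ((∑ a, ∑ b, Δ a b * S (Equiv.swap i i' a) b) < (∑ a, ∑ b, Δ a b * S a b) ∧
           (∑ a, ∑ b, Δ (Equiv.swap i i' a) b * S (Equiv.swap i i' a) b) <
             (∑ a, ∑ b, Δ (Equiv.swap i i' a) b * S a b)) := by
  have key : ∀ f : Fin n → ℝ, (∑ a, f (Equiv.swap i i' a)) = ∑ a, f a := fun f =>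
    Equiv.sum_comp (Equiv.swap i i') f
  refine ⟨?_, fun S => ⟨?_, ?_⟩, fun S ⟨h1, h2⟩ => ?_⟩
  · ext a b
    simp only [signM, Matrix.of_apply]
    rcases eq_or_ne a i with rfl | ha
    · simp only [Equiv.swap_apply_left]
      simp [hclus b]
    rcases eq_or_ne a i' with rfl | ha'
    · simp only [Equiv.swap_apply_right]
      simp [hclus b]
    · simp only [Equiv.swap_apply_of_ne_of_ne ha ha']
  · exact (key fun a => ∑ b, Δ a b * S a b).symm
  · have h := key fun a => ∑ b, Δ (Equiv.swap i i' a) b * S a b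
    simp only [Equiv.swap_apply_self] at h
    exact h.symm
  · have e1 := key fun a => ∑ b, Δ a b * S a b
    have e2 := key fun a => ∑ b, Δ (Equiv.swap i i' a) b * S a b
    simp only [Equiv.swap_apply_self] at e1 e2
    rw [e1] at h2
    rw [← e2] at h2
    exact absurd h2 (not_lt.mpr h1.le)
end

section
/- Let 0 < y < x ≤ 0.5 and let Δ be the symmetric 3×3 real matrix with rows [x, y, −(x+y)], [y, x, −(x+y)], [−(x+y), −(x+y), 2(x+y)]. Then there is NO score matrix S : {1,2,3}×{1,2,3} → ℝ making the multi-task mechanism strongly truthful for Δ. In fact, no S simultaneously satisfies the three strict inequalities E_Δ(S,𝕀,𝕀) > E_Δ(S,F¹,G¹), E_Δ(S,𝕀,𝕀) > E_Δ(S,F²,G²), and E_Δ(S,𝕀,𝕀) > E_Δ(S,F³,G³), where F¹ is the transposition swapping signals 1 and 2 with G¹ = 𝕀, F² = G² is the strategy mapping both 1 and 2 to 1 and fixing 3, and F³ = G³ is the strategy mapping both 1 and 2 to 2 and fixing 3. Hence there exist symmetric signal distributions for which no multi-task mechanism is strongly truthful, even with complete knowledge of Δ. -/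
/-- For `0 < y < x ≤ 1/2` and the symmetric `3×3` Delta matrix with
rows `[x, y, −(x+y)]`, `[y, x, −(x+y)]`, `[−(x+y), −(x+y), 2(x+y)]`, no score matrix
`S` simultaneously satisfies the three strict strong-truthfulness inequalities against
the deviation profiles `(F¹,𝕀)` (with `F¹` the transposition of signals 1 and 2),
`(F²,F²)` (mapping both 1 and 2 to 1, fixing 3) and `(F³,F³)` (mapping both 1 and 2 to
2, fixing 3).  Hence there exist symmetric signal distributions for which no multi-task
mechanism is strongly truthful, even with complete knowledge of `Δ`. -/
theorem no_strongly_truthful_mechanism_exists (x y : ℝ)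
    (hy : 0 < y) (hyx : y < x) (hx : x ≤ 1 / 2)
    (Δ : Matrix (Fin 3) (Fin 3) ℝ)
    (hΔ : Δ = !![x, y, -(x + y); y, x, -(x + y); -(x + y), -(x + y), 2 * (x + y)])
    (S : Fin 3 → Fin 3 → ℝ) :
    ¬ ((∑ i, ∑ j, Δ i j * S ((![1, 0, 2] : Fin 3 → Fin 3) i) j <
          ∑ i, ∑ j, Δ i j * S i j) ∧
       (∑ i, ∑ j, Δ i j * S ((![0, 0, 2] : Fin 3 → Fin 3) i)
            ((![0, 0, 2] : Fin 3 → Fin 3) j) <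
          ∑ i, ∑ j, Δ i j * S i j) ∧
       (∑ i, ∑ j, Δ i j * S ((![1, 1, 2] : Fin 3 → Fin 3) i)
            ((![1, 1, 2] : Fin 3 → Fin 3) j) <
          ∑ i, ∑ j, Δ i j * S i j)) := by
  rintro ⟨h1, h2, h3⟩
  subst hΔ
  simp only [Fin.sum_univ_three, Matrix.cons_val_zero, Matrix.cons_val_one,
    Matrix.head_cons, Matrix.cons_val_two, Matrix.tail_cons, Matrix.head_fin_const,
    Matrix.of_apply] at h1 h2 h3
  nlinarith [mul_pos hy (sub_pos.mpr hyx), h1, h2, h3]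
end

section
/- Let Δ be an n×n real matrix. For every score matrix S with entries in {0,1} and all deterministic strategies F, G : {1,…,n} → {1,…,n}, it holds that Σ_{i,j} Δ_ij · S(F(i), G(j)) ≤ Σ_{(i,j) : Δ_ij > 0} Δ_ij = Σ_{i,j} Δ_ij · Sign(Δ)_ij. That is, truthful reporting under the score matrix S* = Sign(Δ) achieves the maximum expected payment over all pairs (S, (F,G)) of 0/1 score matrices and deterministic strategy profiles. -/
/-- For any `Δ`, any 0/1 score matrix `S` and any deterministic
strategies `F, G`, the expected payment `Σ_{i,j} Δ_ij · S (F i) (G j)` is at most the sum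
of the positive entries of `Δ`, which equals the truthful payment under the score
matrix `S* = Sign(Δ)`. -/
theorem truthful_with_sign_score_is_max (n : ℕ) (Δ : Matrix (Fin n) (Fin n) ℝ)
    (S : Fin n → Fin n → ℝ) (hS : ∀ i j, S i j = 0 ∨ S i j = 1)
    (F G : Fin n → Fin n) :
    (∑ i, ∑ j, Δ i j * S (F i) (G j)) ≤
        (∑ i, ∑ j, if 0 < Δ i j then Δ i j else 0) ∧
      (∑ i, ∑ j, if 0 < Δ i j then Δ i j else 0) =
        ∑ i, ∑ j, Δ i j * (if 0 < Δ i j then (1 : ℝ) else 0) := by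
  constructor
  · apply Finset.sum_le_sum; intro i _
    apply Finset.sum_le_sum; intro j _
    rcases hS (F i) (G j) with h | h <;> rw [h] <;> split <;> nlinarith
  · apply Finset.sum_congr rfl; intro i _
    apply Finset.sum_congr rfl; intro j _
    split <;> simp
end

section
/- Let Δ and Δ' be any n×n real matrices. Then |Σ_{i,j} Δ_ij · (Sign(Δ')_ij − Sign(Δ)_ij)| ≤ Σ_{i,j} |Δ_ij − Δ'_ij|. In particular, if the estimated Delta matrix Δ' is within total (entrywise L1) distance ε of the true Delta matrix Δ, then the truthful expected payment computed with the estimated score matrix Sign(Δ') differs from the truthful expected payment with the true score matrix Sign(Δ) by at most ε. -/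
/-- For any `n×n` real matrices `Δ` and `Δ'`,
`|Σ_{i,j} Δ_ij (Sign(Δ')_ij − Sign(Δ)_ij)| ≤ Σ_{i,j} |Δ_ij − Δ'_ij|`: if the estimated
Delta matrix is within entrywise-L1 distance `ε` of the true one, the truthful expected
payment under the estimated sign score matrix is within `ε` of that under the true
sign score matrix. -/
theorem sign_score_payment_estimation_error (n : ℕ) (Δ Δ' : Matrix (Fin n) (Fin n) ℝ) :
    |∑ i, ∑ j, Δ i j *
        ((if 0 < Δ' i j then (1 : ℝ) else 0) - (if 0 < Δ i j then (1 : ℝ) else 0))| ≤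
      ∑ i, ∑ j, |Δ i j - Δ' i j| := by
  calc |∑ i, ∑ j, Δ i j *
        ((if 0 < Δ' i j then (1 : ℝ) else 0) - (if 0 < Δ i j then (1 : ℝ) else 0))|
      ≤ ∑ i, ∑ j, |Δ i j *
        ((if 0 < Δ' i j then (1 : ℝ) else 0) - (if 0 < Δ i j then (1 : ℝ) else 0))| := by
        refine (Finset.abs_sum_le_sum_abs _ _).trans ?_
        exact Finset.sum_le_sum fun i _ => Finset.abs_sum_le_sum_abs _ _
    _ ≤ ∑ i, ∑ j, |Δ i j - Δ' i j| := by
        refine Finset.sum_le_sum fun i _ => Finset.sum_le_sum fun j _ => ?_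
        rcases lt_or_ge 0 (Δ' i j) with h' | h' <;> rcases lt_or_ge 0 (Δ i j) with h | h <;>
          simp [h, h', not_lt.mpr] <;>
          rcases abs_cases (Δ i j - Δ' i j) with ⟨e, he⟩ | ⟨e, he⟩ <;>
          rcases abs_cases (Δ i j) with ⟨f, hf⟩ | ⟨f, hf⟩ <;> rw [e, f] <;> linarith
end

section
/- Let Δ and Δ' be n×n real matrices with Σ_{i,j} |Δ_ij − Δ'_ij| ≤ ε for some ε > 0. Then for every score matrix S with entries in {0,1} and all deterministic strategies F, G : {1,…,n} → {1,…,n}: Σ_{i,j} Δ_ij · Sign(Δ')(i,j) ≥ Σ_{i,j} Δ_ij · S(F(i), G(j)) − ε. That is, under the detail-free CA mechanism with score matrix Sign(Δ') estimated from reports, truthful reporting yields expected payment within ε of the maximum attainable by any 0/1 score matrix and any strategy profile; moreover, since any profile with an uninformed (constant) strategy earns zero while the truthful payment is at least Σ_{(i,j):Δ_ij>0} Δ_ij − ε, for sufficiently small ε the truthful profile strictly beats every uninformed strategy. This is the deterministic core of the (ε,δ)-informed truthfulness of the detail-free CA mechanism. -/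
/-- If the estimated Delta matrix `Δ'` is within entrywise-L1
distance `ε` of the true Delta matrix `Δ`, then truthful reporting under the estimated
score matrix `Sign(Δ')` earns, in expectation, at least `E(S,F,G) − ε` for every 0/1
score matrix `S` and all deterministic strategies `F, G`: the deterministic core of
the `(ε,δ)`-informed truthfulness of the detail-free CA mechanism. -/
theorem detail_free_ca_eps_optimal (n : ℕ) (Δ Δ' : Matrix (Fin n) (Fin n) ℝ)
    (ε : ℝ) (hε : 0 < ε)
    (hclose : ∑ i, ∑ j, |Δ i j - Δ' i j| ≤ ε)
    (S : Fin n → Fin n → ℝ) (hS : ∀ i j, S i j = 0 ∨ S i j = 1)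
    (F G : Fin n → Fin n) :
    (∑ i, ∑ j, Δ i j * S (F i) (G j)) - ε ≤
      ∑ i, ∑ j, Δ i j * (if 0 < Δ' i j then (1 : ℝ) else 0) := by
  have key : ∀ i : Fin n, ∀ j : Fin n,
      Δ i j * S (F i) (G j) - |Δ i j - Δ' i j| ≤
        Δ i j * (if 0 < Δ' i j then (1 : ℝ) else 0) := by
    intro i j
    rcases hS (F i) (G j) with h | h <;> rw [h] <;>
      split_ifs with hd <;>
      rcases abs_cases (Δ i j - Δ' i j) with ⟨he, _⟩ | ⟨he, _⟩ <;>
      rw [he] <;> nlinarith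
  have hsum : ∑ i, ∑ j, (Δ i j * S (F i) (G j) - |Δ i j - Δ' i j|) ≤
      ∑ i, ∑ j, Δ i j * (if 0 < Δ' i j then (1 : ℝ) else 0) := by
    apply Finset.sum_le_sum; intro i _
    exact Finset.sum_le_sum fun j _ => key i j
  have hsplit : ∑ i, ∑ j, (Δ i j * S (F i) (G j) - |Δ i j - Δ' i j|) =
      (∑ i, ∑ j, Δ i j * S (F i) (G j)) - ∑ i, ∑ j, |Δ i j - Δ' i j| := by
    rw [← Finset.sum_sub_distrib]
    exact Finset.sum_congr rfl fun i _ => Finset.sum_sub_distrib _ _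
  linarith [hsum, hsplit, hclose]
end
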